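/- Let f(β) = √(1 + β·SNR) for β ∈ [0, T/M), with SNR, T, M > 0 and constants 0 < a ≤ c, 0 < b ≤ d. Define A(β) = (T/M − β)·(erf(a f(β))·erf(b f(β)))/(erf(c f(β))·erf(d f(β))). Then any interior critical point β* of A satisfies (SNR/(√π f(β*)))·(T/M − β*)·( a·e^{-a²f(β*)²}/erf(a f(β*)) + b·e^{-b²f(β*)²}/erf(b f(β*)) − c·e^{-c²f(β*)²}/erf(c f(β*)) − d·e^{-d²f(β*)²}/erf(d f(β*)) ) = 1. -/

import Mathlib

open Real

/-! At an interior critical point of `(T/M - β) · P(β) / Q(β)` the logarithmic derivative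
vanishes: `-1 + (T/M - β) (P'/P - Q'/Q) = 0`. With `f = √(1 + β SNR)`, so `f' = SNR / (2f)`, each
factor `erf (k f)` contributes `k f' erf' (k f) / erf (k f) = SNR/(√π f) · k e^{-k²f²} / erf (k f)`
to `P'/P` or `Q'/Q`. -/

noncomputable def erf (x : ℝ) : ℝ := (2 / Real.sqrt Real.pi) * ∫ t in (0:ℝ)..x, Real.exp (-t^2)

lemma hasDerivAt_erf (x : ℝ) : HasDerivAt erf (2 / √π * exp (-x ^ 2)) x := by
  have hc : Continuous fun t : ℝ => exp (-t ^ 2) := by fun_prop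
  exact (intervalIntegral.integral_hasDerivAt_right (hc.intervalIntegrable _ _)
    (hc.stronglyMeasurableAtFilter _ _) hc.continuousAt).const_mul _

lemma erf_pos {x : ℝ} (hx : 0 < x) : 0 < erf x := by
  refine mul_pos (by positivity) (intervalIntegral.intervalIntegral_pos_of_pos_on ?_ ?_ hx)
  · exact (by fun_prop : Continuous fun t : ℝ => exp (-t ^ 2)).intervalIntegrable _ _
  · intro t _
    positivity

lemma hasDerivAt_erf_mul_sqrt (k SNR : ℝ) {β : ℝ} (hβ : 0 < 1 + β * SNR) :
    HasDerivAt (fun x => erf (k * √(1 + x * SNR)))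
      (SNR / (√π * √(1 + β * SNR)) * (k * exp (-(k ^ 2 * √(1 + β * SNR) ^ 2)))) β := by
  have hsqrt : HasDerivAt (fun x => √(1 + x * SNR)) (SNR / (2 * √(1 + β * SNR))) β := by
    simpa using (((hasDerivAt_id β).mul_const SNR).const_add 1).sqrt hβ.ne'
  refine ((hasDerivAt_erf _).comp β (hsqrt.const_mul k)).congr_deriv ?_
  have : √(1 + β * SNR) ≠ 0 := (sqrt_pos.2 hβ).ne'
  rw [mul_pow]
  field_simp

lemma add_mul_sub_div_eq_zero_of_hasDerivAt_mul_div {u p q : ℝ → ℝ} {u' p' q' x : ℝ}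
    (hu : HasDerivAt u u' x) (hp : HasDerivAt p p' x) (hq : HasDerivAt q q' x)
    (hpx : p x ≠ 0) (hqx : q x ≠ 0) (hcrit : HasDerivAt (fun y => u y * p y / q y) 0 x) :
    u' + u x * (p' / p x - q' / q x) = 0 := by
  have h := hcrit.unique ((hu.mul hp).div hq hqx)
  rw [Pi.mul_apply] at h
  field_simp at h ⊢
  linear_combination -h

theorem ASE_optimal_condition_general (a b c d SNR T M : ℝ)
    (ha : 0 < a) (hac : a ≤ c) (hb : 0 < b) (hbd : b ≤ d)
    (hSNR : 0 < SNR)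
    (β : ℝ) (hβ : β ∈ Set.Ioo (0:ℝ) (T / M))
    (hcrit : HasDerivAt
      (fun β : ℝ => (T / M - β) *
        (erf (a * Real.sqrt (1 + β * SNR)) * erf (b * Real.sqrt (1 + β * SNR))) /
          (erf (c * Real.sqrt (1 + β * SNR)) * erf (d * Real.sqrt (1 + β * SNR))))
      0 β) :
    (SNR / (Real.sqrt Real.pi * Real.sqrt (1 + β * SNR))) * (T / M - β) *
      (a * Real.exp (-(a^2 * Real.sqrt (1 + β * SNR)^2)) / erf (a * Real.sqrt (1 + β * SNR))
        + b * Real.exp (-(b^2 * Real.sqrt (1 + β * SNR)^2)) / erf (b * Real.sqrt (1 + β * SNR))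
        - c * Real.exp (-(c^2 * Real.sqrt (1 + β * SNR)^2)) / erf (c * Real.sqrt (1 + β * SNR))
        - d * Real.exp (-(d^2 * Real.sqrt (1 + β * SNR)^2)) / erf (d * Real.sqrt (1 + β * SNR)))
      = 1 := by
  have hβSNR : 0 < 1 + β * SNR := by nlinarith [hβ.1]
  have herf : ∀ k, 0 < k → 0 < erf (k * √(1 + β * SNR)) := fun k hk =>
    erf_pos (mul_pos hk (sqrt_pos.2 hβSNR))
  have ha' := herf a ha
  have hb' := herf b hb
  have hc' := herf c (ha.trans_le hac)
  have hd' := herf d (hb.trans_le hbd)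
  have hlog := add_mul_sub_div_eq_zero_of_hasDerivAt_mul_div
    ((hasDerivAt_id β).const_sub (T / M))
    ((hasDerivAt_erf_mul_sqrt a SNR hβSNR).mul (hasDerivAt_erf_mul_sqrt b SNR hβSNR))
    ((hasDerivAt_erf_mul_sqrt c SNR hβSNR).mul (hasDerivAt_erf_mul_sqrt d SNR hβSNR))
    (mul_pos ha' hb').ne' (mul_pos hc' hd').ne' hcrit
  simp only [Pi.mul_apply, id_eq] at hlog
  set ea := erf (a * √(1 + β * SNR))
  set eb := erf (b * √(1 + β * SNR))
  set ec := erf (c * √(1 + β * SNR))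
  set ed := erf (d * √(1 + β * SNR))
  field_simp at hlog ⊢
  linear_combination hlog

theorem ASE_optimal_condition (a b c d SNR T M : ℝ)
    (ha : 0 < a) (hac : a ≤ c) (hb : 0 < b) (hbd : b ≤ d)
    (hSNR : 0 < SNR) (hT : 0 < T) (hM : 0 < M)
    (β : ℝ) (hβ : β ∈ Set.Ioo (0:ℝ) (T / M))
    (hcrit : HasDerivAt
      (fun β : ℝ => (T / M - β) *
        (erf (a * Real.sqrt (1 + β * SNR)) * erf (b * Real.sqrt (1 + β * SNR))) /
          (erf (c * Real.sqrt (1 + β * SNR)) * erf (d * Real.sqrt (1 + β * SNR))))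
      0 β) :
    (SNR / (Real.sqrt Real.pi * Real.sqrt (1 + β * SNR))) * (T / M - β) *
      (a * Real.exp (-(a^2 * Real.sqrt (1 + β * SNR)^2)) / erf (a * Real.sqrt (1 + β * SNR))
        + b * Real.exp (-(b^2 * Real.sqrt (1 + β * SNR)^2)) / erf (b * Real.sqrt (1 + β * SNR))
        - c * Real.exp (-(c^2 * Real.sqrt (1 + β * SNR)^2)) / erf (c * Real.sqrt (1 + β * SNR))
        - d * Real.exp (-(d^2 * Real.sqrt (1 + β * SNR)^2)) / erf (d * Real.sqrt (1 + β * SNR)))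
      = 1 :=
  ASE_optimal_condition_general a b c d SNR T M ha hac hb hbd hSNR β hβ hcrit
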